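/- For any μ₁, μ₂ ∈ ℝ^d and σ > 0, the total variation distance between the Gaussian measure with mean μ₁ and covariance σ² Id and the Gaussian measure with mean μ₂ and covariance σ² Id equals 1 − 2Φ(−‖μ₁ − μ₂‖/(2σ)). -/

import Mathlib

/-!
The density of `gaussianE d μ₁ (σ²)` dominates that of `gaussianE d μ₂ (σ²)` exactly on the
half-space `H` of points closer to `μ₁` than to `μ₂`, so `H` is a Hahn set of the difference and
the supremum defining the total variation distance is attained at `H`. Comparing characteristic
functions, `gaussianE d m (σ²)` is the law of `m + σ Y` with `Y` standard Gaussian, and `⟪w, Y⟫`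
is standard normal for every unit vector `w`. Taking `w` normal to the bisecting hyperplane of
`μ₁ μ₂`, the two means sit at standardized distance `±‖μ₁ - μ₂‖ / (2σ)` from it, whence the value
`Φ(δ) - Φ(-δ) = 1 - 2Φ(-δ)` with `δ = ‖μ₁ - μ₂‖ / (2σ)`.
-/

open MeasureTheory

/-- The Gaussian measure on `ℝ^d` with mean `μ` and covariance matrix `σ2 • Id`. -/
noncomputable def gaussianE (d : ℕ) (μ : EuclideanSpace ℝ (Fin d)) (σ2 : ℝ) :
    Measure (EuclideanSpace ℝ (Fin d)) :=
  volume.withDensity fun x =>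
    ENNReal.ofReal ((2 * Real.pi * σ2) ^ (-(d : ℝ) / 2) * Real.exp (-‖x - μ‖ ^ 2 / (2 * σ2)))

/-- The total variation distance between two measures. -/
noncomputable def tvDist {E : Type*} [MeasurableSpace E] (μ ν : Measure E) : ℝ :=
  ⨆ A : {A : Set E // MeasurableSet A}, |(μ A.1).toReal - (ν A.1).toReal|

/-- The cumulative distribution function of the standard normal distribution. -/
noncomputable def stdGaussianCDF (t : ℝ) : ℝ :=
  ((ProbabilityTheory.gaussianReal 0 1) (Set.Iic t)).toReal

open ProbabilityTheory Set
open scoped RealInnerProductSpace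

section TotalVariation

variable {E : Type*} [MeasurableSpace E]

lemma tvDist_self (μ : Measure E) : tvDist μ μ = 0 := by
  have : Nonempty {A : Set E // MeasurableSet A} := ⟨⟨∅, .empty⟩⟩
  simp [tvDist]

lemma restrict_withDensity_le_restrict_withDensity {ρ : Measure E} {f g : E → ENNReal}
    {s : Set E} (hs : MeasurableSet s) (hfg : ∀ x ∈ s, f x ≤ g x) :
    (ρ.withDensity f).restrict s ≤ (ρ.withDensity g).restrict s := by
  rw [restrict_withDensity hs, restrict_withDensity hs]
  exact withDensity_mono ((ae_restrict_iff' hs).2 (ae_of_all _ hfg))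

lemma tvDist_eq_of_restrict_le {μ ν : Measure E} [IsFiniteMeasure μ] [IsFiniteMeasure ν]
    (huniv : μ univ = ν univ) {H : Set E} (hH : MeasurableSet H)
    (hνμ : ν.restrict H ≤ μ.restrict H) (hμν : μ.restrict Hᶜ ≤ ν.restrict Hᶜ) :
    tvDist μ ν = μ.real H - ν.real H := by
  have hsub : ∀ A, MeasurableSet A → μ.real A - ν.real A ≤ μ.real H - ν.real H := by
    intro A hA
    have h₁ : μ.real (A ∩ Hᶜ) ≤ ν.real (A ∩ Hᶜ) := by
      have := Measure.le_iff'.1 hμν A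
      rw [Measure.restrict_apply' hH.compl, Measure.restrict_apply' hH.compl] at this
      exact ENNReal.toReal_mono (measure_ne_top _ _) this
    have h₂ : ν.real (Aᶜ ∩ H) ≤ μ.real (Aᶜ ∩ H) := by
      have := Measure.le_iff'.1 hνμ Aᶜ
      rw [Measure.restrict_apply' hH, Measure.restrict_apply' hH] at this
      exact ENNReal.toReal_mono (measure_ne_top _ _) this
    have hA_split (ρ : Measure E) [IsFiniteMeasure ρ] :
        ρ.real A = ρ.real (A ∩ H) + ρ.real (A ∩ Hᶜ) := by
      rw [← sdiff_eq, measureReal_inter_add_sdiff hH]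
    have hH_split (ρ : Measure E) [IsFiniteMeasure ρ] :
        ρ.real H = ρ.real (A ∩ H) + ρ.real (Aᶜ ∩ H) := by
      rw [inter_comm A, inter_comm Aᶜ, ← sdiff_eq, measureReal_inter_add_sdiff hA]
    rw [hA_split μ, hA_split ν, hH_split μ, hH_split ν]
    linarith
  have hbound : ∀ A, MeasurableSet A → |μ.real A - ν.real A| ≤ μ.real H - ν.real H := by
    intro A hA
    refine abs_le.2 ⟨?_, hsub A hA⟩
    have := hsub Aᶜ hA.compl
    rw [measureReal_compl hA, measureReal_compl hA, measureReal_def, huniv,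
      ← measureReal_def] at this
    linarith
  have hnonneg : 0 ≤ μ.real H - ν.real H := by simpa using hsub ∅ .empty
  refine le_antisymm (ciSup_le fun A => hbound A.1 A.2) ?_
  calc μ.real H - ν.real H = |μ.real H - ν.real H| := (abs_of_nonneg hnonneg).symm
    _ ≤ tvDist μ ν :=
      le_ciSup (f := fun A : {A : Set E // MeasurableSet A} => |μ.real A.1 - ν.real A.1|)
        ⟨_, forall_mem_range.2 fun A => hbound A.1 A.2⟩ ⟨H, hH⟩

end TotalVariation

lemma stdGaussianCDF_neg (t : ℝ) : stdGaussianCDF (-t) = 1 - stdGaussianCDF t := by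
  have hneg : (gaussianReal 0 1).real (Iic (-t)) = (gaussianReal 0 1).real (Iio t)ᶜ := by
    conv_lhs => rw [← neg_zero, ← gaussianReal_map_neg]
    rw [map_measureReal_apply (by fun_prop) measurableSet_Iic, compl_Iio]
    congr 1
    ext x
    simp
  have := nullSingletonClass_gaussianReal (μ := 0) one_ne_zero
  rw [stdGaussianCDF, stdGaussianCDF, ← measureReal_def, ← measureReal_def, hneg,
    probReal_compl_eq_one_sub measurableSet_Iio, measureReal_congr Iio_ae_eq_Iic]

section IsotropicGaussian

variable {V : Type*} [NormedAddCommGroup V] [InnerProductSpace ℝ V]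

lemma norm_sub_le_norm_sub_iff (a b x : V) :
    ‖x - a‖ ≤ ‖x - b‖ ↔ ⟪b - a, x - a⟫ ≤ ‖b - a‖ ^ 2 / 2 := by
  rw [← sq_le_sq₀ (norm_nonneg _) (norm_nonneg _), show x - b = (x - a) - (b - a) by abel,
    norm_sub_sq_real (x - a), real_inner_comm]
  constructor <;> intro h <;> linarith

noncomputable def isotropicGaussianPDF (m : V) (σ : ℝ) (x : V) : ℝ :=
  (2 * Real.pi * σ ^ 2) ^ (-(Module.finrank ℝ V : ℝ) / 2) * Real.exp (-‖x - m‖ ^ 2 / (2 * σ ^ 2))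

lemma isotropicGaussianPDF_nonneg (m : V) (σ : ℝ) (x : V) : 0 ≤ isotropicGaussianPDF m σ x := by
  unfold isotropicGaussianPDF
  positivity

lemma isotropicGaussianPDF_le_of_norm_sub_le {m₁ m₂ x : V} (σ : ℝ) (h : ‖x - m₁‖ ≤ ‖x - m₂‖) :
    isotropicGaussianPDF m₂ σ x ≤ isotropicGaussianPDF m₁ σ x := by
  unfold isotropicGaussianPDF
  gcongr

variable [MeasurableSpace V] [BorelSpace V]

lemma measurable_isotropicGaussianPDF (m : V) (σ : ℝ) :
    Measurable (isotropicGaussianPDF m σ) := by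
  unfold isotropicGaussianPDF
  fun_prop

variable [FiniteDimensional ℝ V]

open Complex in
lemma integral_cexp_isotropicGaussian {σ : ℝ} (hσ : σ ≠ 0) (m t : V) :
    ∫ x : V, cexp (-‖x - m‖ ^ 2 / (2 * σ ^ 2) + ⟪x, t⟫ * I) =
      (2 * Real.pi * σ ^ 2 : ℝ) ^ ((Module.finrank ℝ V : ℂ) / 2) *
        cexp (⟪m, t⟫ * I - σ ^ 2 * ‖t‖ ^ 2 / 2) := by
  have hb : 0 < (1 / (2 * σ ^ 2 : ℂ)).re := by
    rw [← ofReal_ofNat, ← ofReal_pow, ← ofReal_mul, ← ofReal_one, ← ofReal_div, ofReal_re]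
    positivity
  calc ∫ x : V, cexp (-‖x - m‖ ^ 2 / (2 * σ ^ 2) + ⟪x, t⟫ * I)
      = ∫ x : V, cexp (⟪m, t⟫ * I) *
          cexp (-(1 / (2 * σ ^ 2 : ℂ)) * ‖x‖ ^ 2 + I * ⟪t, x⟫) := by
        rw [← integral_add_right_eq_self _ m]
        congr 1 with x
        rw [← Complex.exp_add, add_sub_cancel_right, inner_add_left, real_inner_comm t x]
        push_cast
        ring_nf
    _ = _ := by
        rw [integral_const_mul, GaussianFourier.integral_cexp_neg_mul_sq_norm_add hb]
        push_cast
        rw [mul_left_comm, ← Complex.exp_add]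
        congr 2
        · field_simp
        · field_simp
          ring_nf
          rw [I_sq]
          ring

open Complex in
lemma charFun_withDensity_isotropicGaussianPDF {σ : ℝ} (hσ : σ ≠ 0) (m t : V) :
    charFun (volume.withDensity fun x => ENNReal.ofReal (isotropicGaussianPDF m σ x)) t =
      cexp (⟪m, t⟫ * I - σ ^ 2 * ‖t‖ ^ 2 / 2) := by
  have hpos : 0 < 2 * Real.pi * σ ^ 2 := by positivity
  calc _ = ∫ x : V, ((2 * Real.pi * σ ^ 2) ^ (-(Module.finrank ℝ V : ℝ) / 2) : ℝ) *
        cexp (-‖x - m‖ ^ 2 / (2 * σ ^ 2) + ⟪x, t⟫ * I) := by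
        rw [charFun_apply, integral_withDensity_eq_integral_toReal_smul
          (measurable_isotropicGaussianPDF m σ).ennreal_ofReal
          (ae_of_all _ fun _ => ENNReal.ofReal_lt_top)]
        congr 1 with x
        rw [ENNReal.toReal_ofReal (isotropicGaussianPDF_nonneg m σ x), isotropicGaussianPDF,
          Complex.exp_add, real_smul]
        push_cast
        ring
    _ = cexp (⟪m, t⟫ * I - σ ^ 2 * ‖t‖ ^ 2 / 2) := by
        rw [integral_const_mul, integral_cexp_isotropicGaussian hσ, ← mul_assoc,
          ofReal_cpow hpos.le, ← cpow_add _ _ (ofReal_ne_zero.mpr hpos.ne')]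
        push_cast
        rw [neg_div, neg_add_cancel, cpow_zero, one_mul]

open Complex in
lemma charFun_map_stdGaussian_affine (m : V) (σ : ℝ) (t : V) :
    charFun ((stdGaussian V).map fun x => m + σ • x) t =
      cexp (⟪m, t⟫ * I - σ ^ 2 * ‖t‖ ^ 2 / 2) := by
  have hcomp : (fun x : V => m + σ • x) = (m + ·) ∘ (σ • ·) := rfl
  have hnorm : ((‖σ • t‖ : ℝ) : ℂ) ^ 2 = (σ : ℂ) ^ 2 * (‖t‖ : ℂ) ^ 2 := by
    rw [← ofReal_pow, norm_smul, mul_pow, Real.norm_eq_abs, sq_abs]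
    push_cast
    rfl
  rw [hcomp, ← Measure.map_map (by fun_prop) (by fun_prop), charFun_map_const_add,
    charFun_map_smul, charFun_stdGaussian, ← Complex.exp_add, hnorm]
  ring_nf

lemma isProbabilityMeasure_withDensity_isotropicGaussianPDF {σ : ℝ} (hσ : σ ≠ 0) (m : V) :
    IsProbabilityMeasure
      (volume.withDensity fun x => ENNReal.ofReal (isotropicGaussianPDF m σ x)) := by
  have h := charFun_withDensity_isotropicGaussianPDF hσ m 0
  rw [charFun_zero] at h
  constructor
  rw [← ENNReal.toReal_eq_one_iff, ← measureReal_def]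
  simpa using h

theorem withDensity_isotropicGaussianPDF_eq_map_stdGaussian {σ : ℝ} (hσ : σ ≠ 0) (m : V) :
    volume.withDensity (fun x => ENNReal.ofReal (isotropicGaussianPDF m σ x)) =
      (stdGaussian V).map fun x => m + σ • x := by
  have := isProbabilityMeasure_withDensity_isotropicGaussianPDF hσ m
  have : IsProbabilityMeasure ((stdGaussian V).map fun x => m + σ • x) :=
    Measure.isProbabilityMeasure_map (by fun_prop)
  exact Measure.ext_of_charFun (funext fun t => by
    rw [charFun_withDensity_isotropicGaussianPDF hσ, charFun_map_stdGaussian_affine])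

lemma stdGaussian_map_inner (w : V) :
    (stdGaussian V).map (fun x => ⟪w, x⟫) = gaussianReal 0 (‖w‖₊ ^ 2) := by
  have h := IsGaussian.map_eq_gaussianReal (μ := stdGaussian V) (innerSL ℝ w)
  rw [integral_strongDual_stdGaussian, variance_dual_stdGaussian, innerSL_apply_norm] at h
  rw [show (fun x : V => ⟪w, x⟫) = innerSL ℝ w from rfl, h, ← coe_nnnorm,
    ← NNReal.coe_pow, Real.toNNReal_coe]

end IsotropicGaussian

section GaussianE

variable {d : ℕ}

lemma gaussianE_eq_withDensity (m : EuclideanSpace ℝ (Fin d)) (σ : ℝ) :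
    gaussianE d m (σ ^ 2) =
      volume.withDensity fun x => ENNReal.ofReal (isotropicGaussianPDF m σ x) := by
  simp only [gaussianE, isotropicGaussianPDF, finrank_euclideanSpace_fin]

lemma gaussianE_eq_map_stdGaussian {σ : ℝ} (hσ : σ ≠ 0) (m : EuclideanSpace ℝ (Fin d)) :
    gaussianE d m (σ ^ 2) = (stdGaussian _).map fun x => m + σ • x := by
  rw [gaussianE_eq_withDensity, withDensity_isotropicGaussianPDF_eq_map_stdGaussian hσ]

lemma isProbabilityMeasure_gaussianE {σ : ℝ} (hσ : σ ≠ 0) (m : EuclideanSpace ℝ (Fin d)) :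
    IsProbabilityMeasure (gaussianE d m (σ ^ 2)) := by
  rw [gaussianE_eq_map_stdGaussian hσ]
  exact Measure.isProbabilityMeasure_map (by fun_prop)

lemma gaussianE_real_inner_le {σ : ℝ} (hσ : 0 < σ) {w : EuclideanSpace ℝ (Fin d)}
    (hw : ‖w‖ = 1) (m : EuclideanSpace ℝ (Fin d)) (t : ℝ) :
    (gaussianE d m (σ ^ 2)).real {x | ⟪w, x⟫ ≤ t} = stdGaussianCDF ((t - ⟪w, m⟫) / σ) := by
  have hpre : (fun x => m + σ • x) ⁻¹' {x | ⟪w, x⟫ ≤ t} =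
      (fun x => ⟪w, x⟫) ⁻¹' Iic ((t - ⟪w, m⟫) / σ) := by
    ext x
    simp only [mem_preimage, mem_ofPred_eq, mem_Iic, inner_add_right, inner_smul_right,
      le_div_iff₀ hσ]
    constructor <;> intro h <;> linarith
  have hw' : ‖w‖₊ = 1 := NNReal.eq hw
  rw [gaussianE_eq_map_stdGaussian hσ.ne', map_measureReal_apply (by fun_prop)
    (measurableSet_le (by fun_prop) (by fun_prop)), hpre,
    ← map_measureReal_apply (by fun_prop) measurableSet_Iic, stdGaussian_map_inner, hw',
    one_pow, stdGaussianCDF, measureReal_def]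

lemma gaussianE_restrict_le_of_norm_sub_le (σ : ℝ) (μ₁ μ₂ : EuclideanSpace ℝ (Fin d))
    {s : Set (EuclideanSpace ℝ (Fin d))} (hs : MeasurableSet s)
    (hcloser : ∀ x ∈ s, ‖x - μ₁‖ ≤ ‖x - μ₂‖) :
    (gaussianE d μ₂ (σ ^ 2)).restrict s ≤ (gaussianE d μ₁ (σ ^ 2)).restrict s := by
  rw [gaussianE_eq_withDensity, gaussianE_eq_withDensity]
  exact restrict_withDensity_le_restrict_withDensity hs fun x hx =>
    ENNReal.ofReal_le_ofReal (isotropicGaussianPDF_le_of_norm_sub_le σ (hcloser x hx))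

lemma tvDist_gaussianE {σ : ℝ} (hσ : 0 < σ) (μ₁ μ₂ : EuclideanSpace ℝ (Fin d)) :
    tvDist (gaussianE d μ₁ (σ ^ 2)) (gaussianE d μ₂ (σ ^ 2)) =
      stdGaussianCDF (‖μ₁ - μ₂‖ / (2 * σ)) - stdGaussianCDF (-‖μ₁ - μ₂‖ / (2 * σ)) := by
  rcases eq_or_ne μ₁ μ₂ with rfl | hne
  · simp [tvDist_self]
  have := isProbabilityMeasure_gaussianE hσ.ne' μ₁
  have := isProbabilityMeasure_gaussianE hσ.ne' μ₂
  set δ := ‖μ₂ - μ₁‖ with hδdef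
  have hδ : 0 < δ := norm_pos_iff.2 (sub_ne_zero.2 hne.symm)
  set w := δ⁻¹ • (μ₂ - μ₁)
  have hw : ‖w‖ = 1 := norm_smul_inv_norm (sub_ne_zero.2 hne.symm)
  have hwμ : ⟪w, μ₂⟫ = ⟪w, μ₁⟫ + δ := by
    rw [← sub_eq_iff_eq_add', ← inner_sub_right, real_inner_smul_left,
      real_inner_self_eq_norm_sq, ← hδdef]
    field_simp
  set H := {x | ‖x - μ₁‖ ≤ ‖x - μ₂‖}
  have hHm : MeasurableSet H := measurableSet_le (by fun_prop) (by fun_prop)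
  have hH : H = {x | ⟪w, x⟫ ≤ ⟪w, μ₁⟫ + δ / 2} := by
    ext x
    rw [mem_ofPred_eq, mem_ofPred_eq, norm_sub_le_norm_sub_iff, ← sub_le_iff_le_add',
      ← inner_sub_right, real_inner_smul_left, inv_mul_le_iff₀ hδ, ← hδdef]
    ring_nf
  rw [tvDist_eq_of_restrict_le (measure_univ.trans measure_univ.symm) hHm
      (gaussianE_restrict_le_of_norm_sub_le σ μ₁ μ₂ hHm fun x hx => hx)
      (gaussianE_restrict_le_of_norm_sub_le σ μ₂ μ₁ hHm.compl
        fun x hx => (not_le.1 (show ¬‖x - μ₁‖ ≤ ‖x - μ₂‖ from hx)).le),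
    hH, gaussianE_real_inner_le hσ hw, gaussianE_real_inner_le hσ hw, hwμ, norm_sub_rev,
    ← hδdef]
  congr 2 <;> ring

end GaussianE

/-- total variation distance between two Gaussian measures on `ℝ^d`
with the same covariance `σ² Id`. -/
theorem stmt4 {d : ℕ} (μ₁ μ₂ : EuclideanSpace ℝ (Fin d)) (σ : ℝ) (hσ : 0 < σ) :
    tvDist (gaussianE d μ₁ (σ ^ 2)) (gaussianE d μ₂ (σ ^ 2))
      = 1 - 2 * stdGaussianCDF (-‖μ₁ - μ₂‖ / (2 * σ)) := by
  rw [tvDist_gaussianE hσ, ← neg_neg (‖μ₁ - μ₂‖ / (2 * σ)), stdGaussianCDF_neg, neg_div]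
  ring
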